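/- arXiv:2108.04501 — 4 statements merged into one kernel-verified Lean document; each statement's English description precedes it below -/
import Mathlib

section
/- Let X and Y be integrable real random variables and a a real number such that E[max(X,Y)] ≥ a. Then (1/2)·E[max(X,a)] + (1/2)·E[max(min(X,a), Y)] ≥ a. -/
open MeasureTheory

theorem stmt_1 {Ω : Type*} [MeasureSpace Ω] [IsProbabilityMeasure (volume : Measure Ω)]
    (X Y : Ω → ℝ) (hX : Integrable X) (hY : Integrable Y) (a : ℝ)
    (h : a ≤ ∫ ω, max (X ω) (Y ω)) :
    a ≤ (1/2) * (∫ ω, max (X ω) a) + (1/2) * (∫ ω, max (min (X ω) a) (Y ω)) := by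
  have hconst : Integrable (fun _ : Ω => a) := integrable_const a
  have h1 : Integrable (fun ω => max (X ω) a) := hX.sup hconst
  have h2 : Integrable (fun ω => max (min (X ω) a) (Y ω)) := (hX.inf hconst).sup hY
  have h3 : Integrable (fun ω => max (X ω) (Y ω)) := hX.sup hY
  have key : ∀ ω, a + max (X ω) (Y ω) ≤ max (X ω) a + max (min (X ω) a) (Y ω) := by
    intro ω
    simp only [max_def, min_def]
    split_ifs <;> linarith
  have hint : a + ∫ ω, max (X ω) (Y ω) ≤
      (∫ ω, max (X ω) a) + ∫ ω, max (min (X ω) a) (Y ω) := by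
    have := integral_mono (hconst.add h3) (h1.add h2) key
    simpa [integral_add, hconst, h3, h1, h2, integral_const, measure_univ] using this
  linarith
end

section
/- Let X and Y be integrable real random variables and a a real number such that E[max(X,Y)] > a. Then (1/2)·E[max(X,a)] + (1/2)·E[max(min(X,a), Y)] > a. -/
open MeasureTheory

theorem stmt_2 {Ω : Type*} [MeasureSpace Ω] [IsProbabilityMeasure (volume : Measure Ω)]
    (X Y : Ω → ℝ) (hX : Integrable X) (hY : Integrable Y) (a : ℝ)
    (h : a < ∫ ω, max (X ω) (Y ω)) :
    a < (1/2) * (∫ ω, max (X ω) a) + (1/2) * (∫ ω, max (min (X ω) a) (Y ω)) := by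
  have hXa : Integrable (fun ω => max (X ω) a) := hX.sup (integrable_const a)
  have hmY : Integrable (fun ω => max (min (X ω) a) (Y ω)) :=
    (hX.inf (integrable_const a)).sup hY
  have hXY : Integrable (fun ω => max (X ω) (Y ω)) := hX.sup hY
  have key : ∫ ω, (a + max (X ω) (Y ω)) ≤ ∫ ω, (max (X ω) a + max (min (X ω) a) (Y ω)) := by
    apply integral_mono ((integrable_const a).add hXY) (hXa.add hmY)
    intro ω
    simp only [Pi.add_apply]
    rcases le_total a (X ω) with hax | hxa
    · rw [max_eq_left hax, min_eq_right hax]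
      rcases le_total (X ω) (Y ω) with h1 | h1
      · rw [max_eq_right h1]; have := le_max_right a (Y ω); linarith
      · rw [max_eq_left h1]; have := le_max_left a (Y ω); linarith
    · rw [max_eq_right hxa, min_eq_left hxa]
  rw [integral_add (integrable_const a) hXY, integral_add hXa hmY,
    integral_const, probReal_univ, smul_eq_mul, one_mul] at key
  linarith
end

section
/- Define ψ : Ω ⇉ ℝ on Ω = {(a,c,d) ∈ ℝ³ : (c > a ⟹ d > a) and (c ≥ a ⟹ d ≥ a)} by ψ(a,c,d) = {d} if c > a or a = c = d; ψ(a,c,d) = {(a+c)/2, d} if c < a < d, or c = a < d, or c < a = d; and ψ(a,c,d) = {(a+c)/2} if max(c,d) < a. Then ψ is non-decreasing in d: for d₁ < d₂ with (a,c,d₁),(a,c,d₂) ∈ Ω, min ψ(a,c,d₁) ≤ min ψ(a,c,d₂) and max ψ(a,c,d₁) ≤ max ψ(a,c,d₂). -/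
open Classical in
/-- The set of extreme Nash equilibrium payoffs of player 1 in the 2×2 game
with payoffs ((a+c)/2,(a+c)/2), (a,c), (c,a), (d,d). -/
noncomputable def psi (a c d : ℝ) : Set ℝ :=
  if c > a ∨ (a = c ∧ c = d) then {d}
  else if (c < a ∧ a < d) ∨ (c = a ∧ a < d) ∨ (c < a ∧ a = d) then {(a + c) / 2, d}
  else {(a + c) / 2}

theorem stmt_13 (a c d₁ d₂ : ℝ) (hd : d₁ < d₂)
    (hΩ₁ : (c > a → d₁ > a) ∧ (c ≥ a → d₁ ≥ a))
    (hΩ₂ : (c > a → d₂ > a) ∧ (c ≥ a → d₂ ≥ a)) :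
    sInf (psi a c d₁) ≤ sInf (psi a c d₂) ∧ sSup (psi a c d₁) ≤ sSup (psi a c d₂) := by
  obtain ⟨h1, h2⟩ := hΩ₁
  obtain ⟨h3, h4⟩ := hΩ₂
  rcases lt_trichotomy c a with hca | hca | hca
  · -- c < a
    have hc1 : ∀ d : ℝ, ¬(c > a ∨ (a = c ∧ c = d)) := by
      rintro d (h | ⟨h, _⟩) <;> linarith
    rcases le_or_gt a d₁ with h | h
    · have hps1 : psi a c d₁ = {(a + c) / 2, d₁} := by
        rw [psi, if_neg (hc1 d₁), if_pos]
        rcases eq_or_lt_of_le h with h' | h'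
        · exact Or.inr (Or.inr ⟨hca, h'⟩)
        · exact Or.inl ⟨hca, h'⟩
      have hps2 : psi a c d₂ = {(a + c) / 2, d₂} := by
        rw [psi, if_neg (hc1 d₂), if_pos (Or.inl ⟨hca, by linarith⟩)]
      rw [hps1, hps2, csInf_pair, csInf_pair, csSup_pair, csSup_pair]
      exact ⟨min_le_min le_rfl hd.le, max_le_max le_rfl hd.le⟩
    · have hps1 : psi a c d₁ = {(a + c) / 2} := by
        rw [psi, if_neg (hc1 d₁), if_neg]
        rintro (⟨_, h'⟩ | ⟨h', _⟩ | ⟨_, h'⟩) <;> linarith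
      rcases le_or_gt a d₂ with h' | h'
      · have hps2 : psi a c d₂ = {(a + c) / 2, d₂} := by
          rw [psi, if_neg (hc1 d₂), if_pos]
          rcases eq_or_lt_of_le h' with h'' | h''
          · exact Or.inr (Or.inr ⟨hca, h''⟩)
          · exact Or.inl ⟨hca, h''⟩
        rw [hps1, hps2, csInf_singleton, csSup_singleton, csInf_pair, csSup_pair]
        exact ⟨le_min le_rfl (by linarith), le_max_left _ _⟩
      · have hps2 : psi a c d₂ = {(a + c) / 2} := by
          rw [psi, if_neg (hc1 d₂), if_neg]
          rintro (⟨_, h''⟩ | ⟨h'', _⟩ | ⟨_, h''⟩) <;> linarith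
        rw [hps1, hps2]
        exact ⟨le_rfl, le_rfl⟩
  · -- c = a
    have ha1 : d₁ ≥ a := h2 hca.ge
    have ha2 : d₂ ≥ a := h4 hca.ge
    have hps2 : psi a c d₂ = {(a + c) / 2, d₂} := by
      rw [psi, if_neg, if_pos (Or.inr (Or.inl ⟨hca, by linarith⟩))]
      rintro (h' | ⟨_, h'⟩) <;> linarith
    rcases eq_or_lt_of_le ha1 with h | h
    · have hps1 : psi a c d₁ = {d₁} := by
        rw [psi, if_pos (Or.inr ⟨hca.symm, by linarith⟩)]
      rw [hps1, hps2, csInf_singleton, csSup_singleton, csInf_pair, csSup_pair]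
      exact ⟨le_min (by linarith) (by linarith), le_trans hd.le (le_max_right _ _)⟩
    · have hps1 : psi a c d₁ = {(a + c) / 2, d₁} := by
        rw [psi, if_neg, if_pos (Or.inr (Or.inl ⟨hca, h⟩))]
        rintro (h' | ⟨_, h'⟩) <;> linarith
      rw [hps1, hps2, csInf_pair, csInf_pair, csSup_pair, csSup_pair]
      exact ⟨min_le_min le_rfl hd.le, max_le_max le_rfl hd.le⟩
  · -- a < c
    rw [psi, psi, if_pos (Or.inl hca), if_pos (Or.inl hca),
      csInf_singleton, csInf_singleton, csSup_singleton, csSup_singleton]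
    exact ⟨hd.le, hd.le⟩
end

section
/- For ε ∈ (0,1), let X_ε take value ε − ε² with probability 1 − ε and value 1 with probability ε. Then E[X_ε] = ε(1 + (1−ε)²), and 1/2 + E[X_ε·1{X_ε ≥ E[X_ε]/2}]/(2·E[X_ε]) = 1/2 + 1/(2(1 + (1−ε)²)), which tends to 3/4 as ε → 0. -/
open MeasureTheory ProbabilityTheory

theorem stmt_17 {Ω : Type*} [MeasureSpace Ω] [IsProbabilityMeasure (volume : Measure Ω)]
    (ε : ℝ) (hε : ε ∈ Set.Ioo (0:ℝ) 1)
    (X : Ω → ℝ) (hX : Measurable X)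
    (hvals : ∀ ω, X ω = ε - ε ^ 2 ∨ X ω = 1)
    (hlow : ℙ {ω | X ω = ε - ε ^ 2} = ENNReal.ofReal (1 - ε))
    (hhigh : ℙ {ω | X ω = 1} = ENNReal.ofReal ε) :
    (∫ ω, X ω) = ε * (1 + (1 - ε) ^ 2) ∧
    1 / 2 + (∫ ω in {ω | (∫ ω', X ω') / 2 ≤ X ω}, X ω) / (2 * ∫ ω, X ω)
      = 1 / 2 + 1 / (2 * (1 + (1 - ε) ^ 2)) ∧
    Filter.Tendsto (fun e : ℝ => 1 / 2 + 1 / (2 * (1 + (1 - e) ^ 2)))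
      (nhdsWithin 0 (Set.Ioi 0)) (nhds (3 / 4)) := by
  obtain ⟨hε0, hε1⟩ := hε
  set A : Set Ω := {ω | X ω = ε - ε ^ 2} with hA
  set B : Set Ω := {ω | X ω = 1} with hB
  have hAm : MeasurableSet A := hX (measurableSet_singleton _)
  have hBm : MeasurableSet B := hX (measurableSet_singleton _)
  have hne : ε - ε ^ 2 ≠ 1 := by nlinarith
  have hdisj : Disjoint A B := by
    rw [Set.disjoint_left]
    intro ω h1 h2
    exact hne (h1.symm.trans h2)
  have hunion : A ∪ B = Set.univ := by
    ext ω; simp only [Set.mem_union, Set.mem_univ, iff_true]; exact hvals ω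
  have hint : Integrable X := by
    apply MeasureTheory.Integrable.mono' (g := fun _ => (1:ℝ)) (integrable_const 1)
      hX.aestronglyMeasurable
    filter_upwards with ω
    rcases hvals ω with h | h <;> rw [h, Real.norm_eq_abs, abs_le] <;> constructor <;> nlinarith
  have hAmeas : (ℙ A).toReal = 1 - ε := by
    rw [hlow, ENNReal.toReal_ofReal (by linarith)]
  have hBmeas : (ℙ B).toReal = ε := by
    rw [hhigh, ENNReal.toReal_ofReal hε0.le]
  have hIA : (∫ ω in A, X ω) = (ε - ε ^ 2) * (1 - ε) := by
    rw [setIntegral_congr_fun hAm (fun ω hω => hω), setIntegral_const, measureReal_def, hAmeas, smul_eq_mul,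
      mul_comm]
  have hIB : (∫ ω in B, X ω) = ε := by
    rw [setIntegral_congr_fun hBm (fun ω hω => hω), setIntegral_const, measureReal_def, hBmeas, smul_eq_mul,
      mul_one]
  have h1 : (∫ ω, X ω) = ε * (1 + (1 - ε) ^ 2) := by
    rw [← setIntegral_univ (f := X), ← hunion,
      setIntegral_union hdisj hBm hint.integrableOn hint.integrableOn, hIA, hIB]
    ring
  refine ⟨h1, ?_, ?_⟩
  · have hset : {ω | (∫ ω', X ω') / 2 ≤ X ω} = B := by
      ext ω
      simp only [Set.mem_setOf_eq, hB, h1]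
      rcases hvals ω with h | h <;> rw [h]
      · constructor
        · intro hle; exfalso; nlinarith [mul_pos (mul_pos hε0 hε0) hε0]
        · intro hc; exact absurd hc hne
      · constructor
        · intro _; rfl
        · intro _; nlinarith
    rw [hset, hIB, h1]
    have hd : (1 + (1 - ε) ^ 2) ≠ 0 := by positivity
    field_simp
  · have hc : ContinuousAt (fun e : ℝ => 1 / 2 + 1 / (2 * (1 + (1 - e) ^ 2))) 0 := by
      apply ContinuousAt.add continuousAt_const
      apply ContinuousAt.div continuousAt_const (by fun_prop)
      norm_num
    have := hc.tendsto.mono_left (nhdsWithin_le_nhds (s := Set.Ioi 0))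
    convert this using 2
    norm_num
end
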